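/- arXiv:1806.05451 — 2 statements merged into one kernel-verified Lean document; each statement's English description precedes it below -/
import Mathlib

section
/- Let 0 <= q_d <= 1 and ξ ~ N(0,1). Then E[ erf( (√(q_d/(1-q_d)) ξ)/√2 )² ] = (2/π) arcsin(q_d). -/
open MeasureTheory ProbabilityTheory Real

/-- The error function `erf x = (2/√π) ∫₀ˣ e^{-t²} dt`. -/
noncomputable def errorFun (x : ℝ) : ℝ :=
  (2 / Real.sqrt Real.pi) * ∫ t in (0:ℝ)..x, Real.exp (-t ^ 2)

/-!
Substituting `t = x v` gives `erf x = (2/√π) x ∫₀¹ e^{-x²v²} dv`, so `erf(sξ)²` is the integral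
over `(v, w) ∈ [0,1]²` of `(4/π) s² ξ² e^{-s²(v²+w²)ξ²}`. Exchanging this with the Gaussian
expectation and using `E[ξ² e^{-aξ²}] = (1+2a)^{-3/2}` leaves the elementary integral
`(2/π) ∫₀¹∫₀¹ k (1 + k(v²+w²))^{-3/2} dw dv` with `k = 2s²`, whose value is
`(2/π) arctan (k / √(1+2k))`. For `k = q/(1-q)` this is `(2/π) arcsin q`.
-/

theorem errorFun_eq_mul_integral (x : ℝ) :
    errorFun x = 2 / √π * (x * ∫ v in (0:ℝ)..1, exp (-(x * v) ^ 2)) := by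
  rcases eq_or_ne x 0 with rfl | hx
  · simp [errorFun]
  · have hsubst := intervalIntegral.integral_comp_mul_left (a := 0) (b := 1)
      (fun t => exp (-t ^ 2)) hx
    rw [mul_zero, mul_one] at hsubst
    rw [errorFun, hsubst, smul_eq_mul, mul_inv_cancel_left₀ hx]

theorem errorFun_mul_sq_eq_integral_integral (s ξ : ℝ) :
    errorFun (s * ξ) ^ 2 = 4 / π * s ^ 2 *
      ∫ v in (0:ℝ)..1, ∫ w in (0:ℝ)..1, ξ ^ 2 * exp (-(s ^ 2 * (v ^ 2 + w ^ 2)) * ξ ^ 2) := by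
  have hexp : ∀ v w : ℝ, exp (-(s * ξ * v) ^ 2) * exp (-(s * ξ * w) ^ 2)
      = exp (-(s ^ 2 * (v ^ 2 + w ^ 2)) * ξ ^ 2) := fun v w => by
    rw [← exp_add]
    ring_nf
  simp_rw [← hexp, intervalIntegral.integral_const_mul, intervalIntegral.integral_mul_const,
    errorFun_eq_mul_integral, mul_pow, div_pow, sq_sqrt pi_pos.le]
  ring

theorem intervalIntegral_integral_swap_of_norm_le {α E : Type*} [MeasurableSpace α]
    [NormedAddCommGroup E] [NormedSpace ℝ E] {μ : Measure α} [SFinite μ] {a b : ℝ}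
    {f : ℝ → α → E} {g : α → ℝ}
    (hf : AEStronglyMeasurable (Function.uncurry f) ((volume.restrict (Set.uIoc a b)).prod μ))
    (hg : Integrable g μ) (hfg : ∀ x y, ‖f x y‖ ≤ g y) :
    ∫ x in a..b, ∫ y, f x y ∂μ = ∫ y, (∫ x in a..b, f x y) ∂μ := by
  have : IsFiniteMeasure (volume.restrict (Set.uIoc a b)) := by rw [Set.uIoc]; infer_instance
  refine intervalIntegral_integral_swap (Integrable.mono' ?_ hf (ae_of_all _ fun p => hfg p.1 p.2))
  simpa using (integrable_const (1 : ℝ)).mul_prod (μ := volume.restrict (Set.uIoc a b)) hg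

theorem integral_intervalIntegral_intervalIntegral_swap {E : Type*} [NormedAddCommGroup E]
    [NormedSpace ℝ E] {μ : Measure ℝ} [SFinite μ] {G : ℝ → ℝ → ℝ → E} {g : ℝ → ℝ}
    (hG : Continuous fun p : ℝ × ℝ × ℝ => G p.1 p.2.1 p.2.2) (hg : Integrable g μ)
    (hGg : ∀ v w ξ, ‖G v w ξ‖ ≤ g ξ) (a b c d : ℝ) :
    ∫ ξ, (∫ v in a..b, ∫ w in c..d, G v w ξ) ∂μ = ∫ v in a..b, ∫ w in c..d, ∫ ξ, G v w ξ ∂μ := by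
  have hinner : ∀ v, ∫ ξ, (∫ w in c..d, G v w ξ) ∂μ = ∫ w in c..d, ∫ ξ, G v w ξ ∂μ := fun v =>
    (intervalIntegral_integral_swap_of_norm_le (by fun_prop) hg (hGg v)).symm
  have hbound : ∀ v ξ, ‖∫ w in c..d, G v w ξ‖ ≤ |d - c| * g ξ := fun v ξ => by
    rw [mul_comm]
    exact intervalIntegral.norm_integral_le_of_norm_le_const fun w _ => hGg v w ξ
  simp_rw [← hinner]
  exact (intervalIntegral_integral_swap_of_norm_le
    (Continuous.aestronglyMeasurable (by fun_prop)) (hg.const_mul _) hbound).symm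

theorem integral_sq_mul_exp_neg_mul_sq {b : ℝ} (hb : 0 < b) :
    ∫ x : ℝ, x ^ 2 * exp (-b * x ^ 2) = √π / (2 * b * √b) := by
  have hGamma : Gamma (3 / 2) = √π / 2 := by
    rw [show (3 : ℝ) / 2 = 1 / 2 + 1 by norm_num, Gamma_add_one (by norm_num), Gamma_one_half_eq]
    ring
  have hpow : b ^ (-(3 / 2) : ℝ) = (b * √b)⁻¹ := by
    rw [rpow_neg hb.le, show (3 : ℝ) / 2 = 1 + 1 / 2 by norm_num, rpow_add hb, rpow_one,
      ← sqrt_eq_rpow]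
  have hhalf := integral_rpow_mul_exp_neg_mul_rpow (p := 2) (q := 2) (by norm_num) (by norm_num) hb
  norm_num [rpow_two] at hhalf
  have heven := integral_comp_abs (f := fun x => x ^ 2 * exp (-(b * x ^ 2)))
  simp only [sq_abs] at heven
  simp_rw [neg_mul, heven, hhalf, hGamma, hpow]
  field_simp

theorem integral_sq_mul_exp_neg_mul_sq_gaussianReal {a : ℝ} (ha : 0 < 1 + 2 * a) :
    ∫ ξ, ξ ^ 2 * exp (-a * ξ ^ 2) ∂gaussianReal 0 1 = ((1 + 2 * a) * √(1 + 2 * a))⁻¹ := by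
  have hdensity : ∀ ξ : ℝ, gaussianPDFReal 0 1 ξ • (ξ ^ 2 * exp (-a * ξ ^ 2))
      = (√(2 * π))⁻¹ * (ξ ^ 2 * exp (-((1 + 2 * a) / 2) * ξ ^ 2)) := fun ξ => by
    have hexp : exp (-(ξ - 0) ^ 2 / (2 * 1)) * exp (-a * ξ ^ 2)
        = exp (-((1 + 2 * a) / 2) * ξ ^ 2) := by
      rw [← exp_add]
      ring_nf
    rw [gaussianPDFReal, smul_eq_mul, NNReal.coe_one, mul_one, ← hexp]
    ring
  rw [integral_gaussianReal_eq_integral_smul one_ne_zero]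
  simp_rw [hdensity]
  rw [integral_const_mul, integral_sq_mul_exp_neg_mul_sq (by positivity),
    sqrt_div' _ zero_le_two, sqrt_mul zero_le_two]
  field_simp

theorem integral_inv_mul_sqrt_add_mul_sq {A k : ℝ} (hA : 0 < A) (hk : 0 ≤ k) :
    ∫ w in (0:ℝ)..1, ((A + k * w ^ 2) * √(A + k * w ^ 2))⁻¹ = (A * √(A + k))⁻¹ := by
  have hpos : ∀ w : ℝ, 0 < A + k * w ^ 2 := fun w => by positivity
  have hderiv : ∀ w : ℝ, HasDerivAt (fun w => w / (A * √(A + k * w ^ 2)))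
      ((A + k * w ^ 2) * √(A + k * w ^ 2))⁻¹ w := fun w => by
    have hS : HasDerivAt (fun w => A + k * w ^ 2) (k * (2 * w)) w := by
      simpa using ((hasDerivAt_pow 2 w).const_mul k).const_add A
    have hsqrt : 0 < √(A + k * w ^ 2) := sqrt_pos.2 (hpos w)
    refine ((hasDerivAt_id' w).fun_div ((hS.sqrt (hpos w).ne').const_mul A)
      (by positivity)).congr_deriv ?_
    have hsq := mul_self_sqrt (hpos w).le
    field_simp
    linear_combination (k * w ^ 2) * hsq
  have hcont : Continuous fun w : ℝ => ((A + k * w ^ 2) * √(A + k * w ^ 2))⁻¹ := by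
    fun_prop (disch := exact fun w => by have := hpos w; positivity)
  rw [intervalIntegral.integral_eq_sub_of_hasDerivAt (fun w _ => hderiv w)
    (hcont.intervalIntegrable 0 1)]
  simp

theorem integral_mul_inv_mul_sqrt_one_add_mul_sq {k : ℝ} (hk : 0 ≤ k) :
    ∫ v in (0:ℝ)..1, k * ((1 + k * v ^ 2) * √(1 + k * v ^ 2 + k))⁻¹
      = arctan (k / √(1 + 2 * k)) := by
  have hpos : ∀ v : ℝ, 0 < 1 + k * v ^ 2 + k := fun v => by positivity
  have hderiv : ∀ v : ℝ, HasDerivAt (fun v => arctan (k * v / √(1 + k * v ^ 2 + k)))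
      (k * ((1 + k * v ^ 2) * √(1 + k * v ^ 2 + k))⁻¹) v := fun v => by
    have hS : HasDerivAt (fun v => 1 + k * v ^ 2 + k) (k * (2 * v)) v := by
      simpa using (((hasDerivAt_pow 2 v).const_mul k).const_add 1).add_const k
    have hsqrt : 0 < √(1 + k * v ^ 2 + k) := sqrt_pos.2 (hpos v)
    refine (((hasDerivAt_id' v).const_mul k).fun_div (hS.sqrt (hpos v).ne')
      hsqrt.ne').arctan.congr_deriv ?_
    have hsq := mul_self_sqrt (hpos v).le
    have : 0 < 1 + k * v ^ 2 := by positivity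
    field_simp
    linear_combination (k ^ 2 * v ^ 2) * hsq
  have hcont : Continuous fun v : ℝ => k * ((1 + k * v ^ 2) * √(1 + k * v ^ 2 + k))⁻¹ := by
    fun_prop (disch := exact fun v => by have := hpos v; positivity)
  rw [intervalIntegral.integral_eq_sub_of_hasDerivAt (fun v _ => hderiv v)
    (hcont.intervalIntegrable 0 1)]
  norm_num
  ring_nf

theorem integral_integral_mul_inv_mul_sqrt {k : ℝ} (hk : 0 ≤ k) :
    ∫ v in (0:ℝ)..1, ∫ w in (0:ℝ)..1,
        k * ((1 + k * (v ^ 2 + w ^ 2)) * √(1 + k * (v ^ 2 + w ^ 2)))⁻¹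
      = arctan (k / √(1 + 2 * k)) := by
  have hinner : ∀ v : ℝ, ∫ w in (0:ℝ)..1,
      k * ((1 + k * (v ^ 2 + w ^ 2)) * √(1 + k * (v ^ 2 + w ^ 2)))⁻¹
        = k * ((1 + k * v ^ 2) * √(1 + k * v ^ 2 + k))⁻¹ := fun v => by
    simp_rw [mul_add, ← add_assoc]
    rw [intervalIntegral.integral_const_mul, integral_inv_mul_sqrt_add_mul_sq (by positivity) hk]
  simp_rw [hinner]
  exact integral_mul_inv_mul_sqrt_one_add_mul_sq hk

theorem arctan_div_one_sub_div_sqrt_eq_arcsin {q : ℝ} (hq₀ : -1 < q) (hq₁ : q < 1) :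
    arctan (q / (1 - q) / √(1 + 2 * (q / (1 - q)))) = arcsin q := by
  have hsub : 0 < 1 - q := by linarith
  have hadd : 0 < 1 + q := by linarith
  have hodds : 1 + 2 * (q / (1 - q)) = (1 + q) / (1 - q) := by
    field_simp
    ring
  rw [arcsin_eq_arctan ⟨hq₀, hq₁⟩, hodds, show 1 - q ^ 2 = (1 - q) * (1 + q) by ring,
    sqrt_div hadd.le, sqrt_mul hsub.le]
  congr 1
  have hsq := mul_self_sqrt hsub.le
  have : 0 < √(1 + q) := sqrt_pos.2 hadd
  have : 0 < √(1 - q) := sqrt_pos.2 hsub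
  field_simp
  linear_combination q * hsq

theorem integral_errorFun_mul_sq_gaussianReal (s : ℝ) :
    ∫ ξ, errorFun (s * ξ) ^ 2 ∂gaussianReal 0 1
      = 2 / π * arctan (2 * s ^ 2 / √(1 + 2 * (2 * s ^ 2))) := by
  set G : ℝ → ℝ → ℝ → ℝ := fun v w ξ => ξ ^ 2 * exp (-(s ^ 2 * (v ^ 2 + w ^ 2)) * ξ ^ 2)
  have hG_le : ∀ v w ξ, ‖G v w ξ‖ ≤ ξ ^ 2 := fun v w ξ => by
    rw [norm_mul, norm_pow, Real.norm_eq_abs, Real.norm_eq_abs, sq_abs, abs_exp]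
    refine mul_le_of_le_one_right (sq_nonneg ξ) (exp_le_one_iff.2 ?_)
    have : 0 ≤ s ^ 2 * (v ^ 2 + w ^ 2) * ξ ^ 2 := by positivity
    linarith
  have hswap := integral_intervalIntegral_intervalIntegral_swap (G := G) (by fun_prop)
    (memLp_id_gaussianReal (μ := 0) (v := 1) 2).integrable_sq hG_le 0 1 0 1
  calc ∫ ξ, errorFun (s * ξ) ^ 2 ∂gaussianReal 0 1
      = 4 / π * s ^ 2 * ∫ ξ, (∫ v in (0:ℝ)..1, ∫ w in (0:ℝ)..1, G v w ξ) ∂gaussianReal 0 1 := by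
        simp only [G, errorFun_mul_sq_eq_integral_integral, integral_const_mul]
    _ = 4 / π * s ^ 2 * ∫ v in (0:ℝ)..1, ∫ w in (0:ℝ)..1,
          ((1 + 2 * (s ^ 2 * (v ^ 2 + w ^ 2))) * √(1 + 2 * (s ^ 2 * (v ^ 2 + w ^ 2))))⁻¹ := by
        rw [hswap]
        simp (disch := positivity) only [G, integral_sq_mul_exp_neg_mul_sq_gaussianReal]
    _ = 2 / π * ∫ v in (0:ℝ)..1, ∫ w in (0:ℝ)..1, 2 * s ^ 2 *
          ((1 + 2 * s ^ 2 * (v ^ 2 + w ^ 2)) * √(1 + 2 * s ^ 2 * (v ^ 2 + w ^ 2)))⁻¹ := by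
        simp_rw [intervalIntegral.integral_const_mul, ← mul_assoc]
        ring
    _ = 2 / π * arctan (2 * s ^ 2 / √(1 + 2 * (2 * s ^ 2))) := by
        rw [integral_integral_mul_inv_mul_sqrt (by positivity)]

/-- With `Ĥ(x) = erf(x/√2)`, `0 ≤ q_d < 1` (the case `q_d = 1` being understood as a limit) and
`ξ ∼ N(0,1)`: `E[Ĥ(√(q_d/(1-q_d)) ξ)²] = (2/π) arcsin q_d`. -/
theorem gaussian_erf_sq_expectation (qd : ℝ) (h0 : 0 ≤ qd) (h1 : qd < 1) :
    ∫ ξ, (errorFun (Real.sqrt (qd / (1 - qd)) * ξ / Real.sqrt 2)) ^ 2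
        ∂(gaussianReal 0 1)
      = (2 / Real.pi) * Real.arcsin qd := by
  have hscale : 2 * (√(qd / (1 - qd)) / √2) ^ 2 = qd / (1 - qd) := by
    rw [div_pow, sq_sqrt (div_nonneg h0 (by linarith)), sq_sqrt zero_le_two]
    ring
  simp_rw [mul_div_right_comm _ _ (√2)]
  rw [integral_errorFun_mul_sq_gaussianReal, hscale,
    arctan_div_one_sub_div_sqrt_eq_arcsin (by linarith) h1]
end

section
/- Consider the linear two-layer network with output φ_out(h) = σ( K^{-1/2} Σ_{l=1}^K h_l ) for a real function σ, weights with identity prior covariance, and a replica-symmetric overlap matrix q ∈ S_K^+ with I_K − q ∈ S_K^+. Then the channel term I_C of the replica free entropy depends on q only through the scalar Γ(q) = K^{-1} 1_K^T q 1_K ∈ [0,1]; in particular the extremizing overlap matrix has all entries equal, q_{ll'} = q/K for some scalar q, and no specialization occurs. -/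
open MeasureTheory ProbabilityTheory Matrix

/-- The positive square root of a positive semi-definite matrix (junk value `0` otherwise). -/
noncomputable def msqrt {K : ℕ} (r : Matrix (Fin K) (Fin K) ℝ) :
    Matrix (Fin K) (Fin K) ℝ := by
  classical exact if h : r.PosSemidef then
    (h.1.eigenvectorUnitary.1 * diagonal ((↑) ∘ (√·) ∘ h.1.eigenvalues) *
      (star h.1.eigenvectorUnitary : Matrix (Fin K) (Fin K) ℝ)) else 0

/-- The standard Gaussian measure on `ℝ^K`. -/
noncomputable def stdGaussianPi (K : ℕ) : Measure (Fin K → ℝ) :=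
  Measure.pi fun _ : Fin K => gaussianReal 0 1

/-- `Γ(q) = K⁻¹ 1ᵀ q 1`. -/
noncomputable def GammaOf {K : ℕ} (q : Matrix (Fin K) (Fin K) ℝ) : ℝ :=
  (K : ℝ)⁻¹ * ∑ l, ∑ l', q l l'

/-- Inner replica channel integral `I_C(y, ξ)` of the linear network
`φ_out(h) = σ(K^{-1/2} ∑ₗ hₗ)` with identity prior covariance and overlap `q`. -/
noncomputable def ICinner {K : ℕ} (Pout : ℝ → ℝ → ℝ) (σ : ℝ → ℝ)
    (q : Matrix (Fin K) (Fin K) ℝ) (y : ℝ) (ξ : Fin K → ℝ) : ℝ :=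
  ∫ Z, Pout y (σ ((Real.sqrt K)⁻¹ *
      ∑ l, ((msqrt (1 - q)).mulVec Z + (msqrt q).mulVec ξ) l)) ∂(stdGaussianPi K)

/-- The channel term `I_C(q) = ∫ dy ∫ Dξ I_C(y,ξ) log I_C(y,ξ)` of the replica free entropy. -/
noncomputable def ICterm {K : ℕ} (Pout : ℝ → ℝ → ℝ) (σ : ℝ → ℝ)
    (q : Matrix (Fin K) (Fin K) ℝ) : ℝ :=
  ∫ y, ∫ ξ, ICinner Pout σ q y ξ * Real.log (ICinner Pout σ q y ξ)
    ∂(stdGaussianPi K) ∂(volume : Measure ℝ)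

/-!
Given `ξ`, the argument `K^{-1/2} 1ᵀ ((1 - q)^{1/2} Z + q^{1/2} ξ)` of `σ` is a linear form in the
standard Gaussian vector `Z`, hence a real Gaussian with mean `m = K^{-1/2} 1ᵀ q^{1/2} ξ` and
variance `K⁻¹ ‖(1 - q)^{1/2} 1‖² = K⁻¹ 1ᵀ (1 - q) 1 = 1 - Γ(q)`; likewise `m` is a linear form in
`ξ` with variance `Γ(q)`. Pushing both Gaussian integrals of `I_C` forward to the real line leaves
an expression in `Γ(q)` alone. The constant overlap `(Γ(q)/K) 1 1ᵀ` is admissible, since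
`1 1ᵀ ≤ K · 1` by Cauchy–Schwarz, and has the same `Γ`.
-/

open Complex in
lemma map_sum_mul_pi_gaussianReal {ι : Type*} [Fintype ι] (c : ι → ℝ) :
    (Measure.pi fun _ : ι => gaussianReal 0 1).map (fun x => ∑ j, c j * x j)
      = gaussianReal 0 (∑ j, c j ^ 2).toNNReal := by
  refine Measure.ext_of_charFun (funext fun t => ?_)
  rw [charFun_apply_real, integral_map (Measurable.aemeasurable (by fun_prop)) (by fun_prop),
    charFun_gaussianReal]
  simp_rw [ofReal_sum, Finset.mul_sum, Finset.sum_mul, Complex.exp_sum]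
  rw [integral_fintype_prod_eq_prod (f := fun j x => cexp (t * (c j * x : ℝ) * I))]
  have hfactor (j : ι) : ∫ x, cexp (t * (c j * x : ℝ) * I) ∂gaussianReal 0 1
      = cexp (-(c j ^ 2 * t ^ 2 / 2 : ℝ)) := by
    have h := charFun_gaussianReal (μ := 0) (v := 1) (t * c j)
    rw [charFun_apply_real] at h
    push_cast at h ⊢
    simp_rw [← mul_assoc]
    rw [h]
    ring_nf
  simp_rw [hfactor, ← Complex.exp_sum,
    Real.coe_toNNReal _ (Finset.sum_nonneg fun j _ => sq_nonneg (c j))]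
  push_cast
  congr 1
  simp [Finset.sum_mul, Finset.sum_div]

lemma integral_comp_sum_mul_pi_gaussianReal {ι E : Type*} [Fintype ι] [NormedAddCommGroup E]
    [NormedSpace ℝ E] (c : ι → ℝ) {f : ℝ → E}
    (hf : AEStronglyMeasurable f (gaussianReal 0 (∑ j, c j ^ 2).toNNReal)) :
    ∫ x, f (∑ j, c j * x j) ∂(Measure.pi fun _ : ι => gaussianReal 0 1)
      = ∫ t, f t ∂gaussianReal 0 (∑ j, c j ^ 2).toNNReal := by
  rw [← map_sum_mul_pi_gaussianReal] at hf ⊢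
  exact (integral_map (Measurable.aemeasurable (by fun_prop)) hf).symm

lemma sum_sq_colSum_eq_sum_mul_transpose {m n : Type*} [Fintype m] [Fintype n] (S : Matrix m n ℝ) :
    ∑ j, (∑ i, S i j) ^ 2 = ∑ i, ∑ i', (S * Sᵀ) i i' := by
  simp only [sq, Finset.sum_mul_sum, mul_apply, transpose_apply]
  rw [Finset.sum_comm]
  exact Finset.sum_congr rfl fun i _ => Finset.sum_comm

section msqrt

variable {K : ℕ} {A : Matrix (Fin K) (Fin K) ℝ}

lemma msqrt_eq_cfc (hA : A.PosSemidef) : msqrt A = cfc Real.sqrt A := by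
  rw [msqrt, dif_pos hA, hA.1.cfc_eq, IsHermitian.cfc, Unitary.conjStarAlgAut_apply]
  rfl

lemma msqrt_mul_self (hA : A.PosSemidef) : msqrt A * msqrt A = A := by
  rw [msqrt_eq_cfc hA, ← cfc_mul ..]
  conv_rhs => rw [← cfc_id' ℝ A hA.1.isSelfAdjoint]
  refine cfc_congr fun x hx => Real.mul_self_sqrt ?_
  obtain ⟨i, rfl⟩ := hA.1.spectrum_real_eq_range_eigenvalues ▸ hx
  exact hA.eigenvalues_nonneg i

lemma transpose_msqrt (hA : A.PosSemidef) : (msqrt A)ᵀ = msqrt A := by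
  rw [msqrt_eq_cfc hA]
  exact (cfc_predicate Real.sqrt A).isHermitian

end msqrt

section GammaOf

variable {K : ℕ}

lemma GammaOf_nonneg {q : Matrix (Fin K) (Fin K) ℝ} (hq : q.PosSemidef) : 0 ≤ GammaOf q := by
  have h := hq.dotProduct_mulVec_nonneg 1
  simp only [star_one, mulVec, dotProduct, Pi.one_apply, mul_one, one_mul] at h
  exact mul_nonneg (by positivity) h

lemma GammaOf_one_sub (hK : K ≠ 0) (q : Matrix (Fin K) (Fin K) ℝ) :
    GammaOf (1 - q) = 1 - GammaOf q := by
  simp only [GammaOf, Matrix.sub_apply, Finset.sum_sub_distrib, one_apply, Finset.sum_ite_eq,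
    Finset.mem_univ, if_true, Finset.sum_const, Finset.card_univ, Fintype.card_fin, nsmul_one]
  field_simp

lemma GammaOf_smul_allOnes (hK : K ≠ 0) (g : ℝ) :
    GammaOf ((g / K) • of fun _ _ : Fin K => (1 : ℝ)) = g := by
  simp only [GammaOf, Matrix.smul_apply, of_apply, smul_eq_mul, mul_one, Finset.sum_const,
    Finset.card_univ, Fintype.card_fin, nsmul_eq_mul]
  field_simp

end GammaOf

lemma posSemidef_smul_allOnes {n : Type*} [Fintype n] {c : ℝ} (hc : 0 ≤ c) :
    (c • of fun _ _ : n => (1 : ℝ)).PosSemidef := by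
  have h := (posSemidef_vecMulVec_self_star (1 : n → ℝ)).smul hc
  have hones : vecMulVec (1 : n → ℝ) (star 1) = of fun _ _ : n => (1 : ℝ) := by
    ext; simp [vecMulVec_apply]
  rwa [hones] at h

lemma posSemidef_one_sub_smul_allOnes {n : Type*} [Fintype n] [DecidableEq n] {c : ℝ}
    (hc0 : 0 ≤ c) (hc : c * Fintype.card n ≤ 1) :
    (1 - c • of fun _ _ : n => (1 : ℝ)).PosSemidef := by
  refine PosSemidef.of_dotProduct_mulVec_nonneg ?_ fun x => ?_
  · exact isHermitian_one.sub (posSemidef_smul_allOnes hc0).1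
  have hform : star x ⬝ᵥ ((1 - c • of fun _ _ : n => (1 : ℝ)) *ᵥ x)
      = ∑ i, x i ^ 2 - c * (∑ i, x i) ^ 2 := by
    rw [sub_mulVec, dotProduct_sub, one_mulVec]
    simp only [star_trivial, dotProduct, mulVec, Matrix.smul_apply, of_apply, smul_eq_mul,
      mul_one, sq, Finset.mul_sum, Finset.sum_mul]
    exact congrArg _ (Finset.sum_congr rfl fun _ _ => Finset.sum_congr rfl fun _ _ => by ring)
  have hcs : (∑ i, x i) ^ 2 ≤ Fintype.card n * ∑ i, x i ^ 2 := by
    simpa using sq_sum_le_card_mul_sum_sq (s := Finset.univ) (f := x)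
  have hsq : 0 ≤ ∑ i, x i ^ 2 := Finset.sum_nonneg fun i _ => sq_nonneg (x i)
  rw [hform]
  nlinarith [mul_le_mul_of_nonneg_left hcs hc0]

section readout

variable {K : ℕ}

noncomputable def readout (M : Matrix (Fin K) (Fin K) ℝ) (j : Fin K) : ℝ :=
  (Real.sqrt K)⁻¹ * ∑ l, M l j

lemma sqrt_inv_mul_sum_mulVec (M : Matrix (Fin K) (Fin K) ℝ) (x : Fin K → ℝ) :
    (Real.sqrt K)⁻¹ * ∑ l, (M *ᵥ x) l = ∑ j, readout M j * x j := by
  simp only [readout, mulVec, dotProduct, Finset.mul_sum, Finset.sum_mul]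
  rw [Finset.sum_comm]
  exact Finset.sum_congr rfl fun _ _ => Finset.sum_congr rfl fun _ _ => by ring

lemma sum_sq_readout_msqrt {A : Matrix (Fin K) (Fin K) ℝ} (hA : A.PosSemidef) :
    ∑ j, readout (msqrt A) j ^ 2 = GammaOf A := by
  simp only [readout, mul_pow, inv_pow, Real.sq_sqrt (Nat.cast_nonneg K), ← Finset.mul_sum,
    sum_sq_colSum_eq_sum_mul_transpose, transpose_msqrt hA, msqrt_mul_self hA, GammaOf]

end readout

section channel

variable {K : ℕ} (Pout : ℝ → ℝ → ℝ) (σ : ℝ → ℝ)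

/-- `I_C(y, ξ)` in terms of `Γ = g` and the mean `m = K^{-1/2} 1ᵀ q^{1/2} ξ` of the argument
of `σ`. -/
noncomputable def scalarICinner (g y m : ℝ) : ℝ :=
  ∫ t, Pout y (σ (t + m)) ∂gaussianReal 0 (1 - g).toNNReal

noncomputable def scalarICterm (g : ℝ) : ℝ :=
  ∫ y, ∫ m, scalarICinner Pout σ g y m * Real.log (scalarICinner Pout σ g y m)
    ∂gaussianReal 0 g.toNNReal ∂(volume : Measure ℝ)

variable {Pout σ}

lemma measurable_scalarICinner {y : ℝ} (hPy : Measurable (Pout y)) (hσ : Measurable σ)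
    (g : ℝ) : Measurable (scalarICinner Pout σ g y) :=
  (hPy.comp (hσ.comp (measurable_snd.add measurable_fst))).stronglyMeasurable
    |>.integral_prod_right'.measurable

lemma ICinner_eq_scalarICinner (hK : K ≠ 0) {y : ℝ} (hPy : Measurable (Pout y))
    (hσ : Measurable σ) {q : Matrix (Fin K) (Fin K) ℝ} (hq1 : (1 - q).PosSemidef)
    (ξ : Fin K → ℝ) :
    ICinner Pout σ q y ξ
      = scalarICinner Pout σ (GammaOf q) y (∑ j, readout (msqrt q) j * ξ j) := by
  have hsplit (Z : Fin K → ℝ) :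
      (Real.sqrt K)⁻¹ * ∑ l, (msqrt (1 - q) *ᵥ Z + msqrt q *ᵥ ξ) l
        = ∑ j, readout (msqrt (1 - q)) j * Z j + ∑ j, readout (msqrt q) j * ξ j := by
    simp only [Pi.add_apply, Finset.sum_add_distrib, mul_add, sqrt_inv_mul_sum_mulVec]
  have hvar : ∑ j, readout (msqrt (1 - q)) j ^ 2 = 1 - GammaOf q := by
    rw [sum_sq_readout_msqrt hq1, GammaOf_one_sub hK]
  rw [ICinner, stdGaussianPi]
  simp_rw [hsplit]
  rw [integral_comp_sum_mul_pi_gaussianReal (f := fun t => Pout y (σ (t + _))) _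
    (hPy.comp (hσ.comp (measurable_add_const _))).aestronglyMeasurable, hvar, scalarICinner]

lemma ICterm_eq_scalarICterm (hK : K ≠ 0) (hPout : Measurable (Function.uncurry Pout))
    (hσ : Measurable σ) {q : Matrix (Fin K) (Fin K) ℝ} (hq : q.PosSemidef)
    (hq1 : (1 - q).PosSemidef) :
    ICterm Pout σ q = scalarICterm Pout σ (GammaOf q) := by
  refine integral_congr_ae (Filter.Eventually.of_forall fun y => ?_)
  simp_rw [ICinner_eq_scalarICinner hK hPout.of_uncurry_left hσ hq1]
  set F := scalarICinner Pout σ (GammaOf q) y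
  have hF : Measurable F := measurable_scalarICinner hPout.of_uncurry_left hσ (GammaOf q)
  rw [stdGaussianPi, integral_comp_sum_mul_pi_gaussianReal (f := fun m => F m * Real.log (F m)) _
    (hF.mul (Real.measurable_log.comp hF)).aestronglyMeasurable, sum_sq_readout_msqrt hq]

end channel

/-- **Linear networks show no specialization.** For the linear two-layer network with output
`φ_out(h) = σ(K^{-1/2} ∑ₗ hₗ)`, identity prior covariance, and replica-symmetric overlap
`q ∈ S_K^+` with `I_K − q ∈ S_K^+`, one has `Γ(q) = K⁻¹ 1ᵀq1 ∈ [0,1]`, the channel term `I_C`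
depends on `q` only through `Γ(q)`, and in particular `I_C(q)` coincides with the channel term
of the overlap matrix all of whose entries equal `Γ(q)/K` — so no specialization occurs. -/
theorem linear_network_no_specialization (K : ℕ) (hK : 0 < K)
    (Pout : ℝ → ℝ → ℝ) (hPout : Measurable (Function.uncurry Pout))
    (σ : ℝ → ℝ) (hσ : Measurable σ) :
    (∀ q : Matrix (Fin K) (Fin K) ℝ, q.PosSemidef → (1 - q).PosSemidef →
      0 ≤ GammaOf q ∧ GammaOf q ≤ 1)
    ∧ (∀ q q' : Matrix (Fin K) (Fin K) ℝ,
        q.PosSemidef → (1 - q).PosSemidef →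
        q'.PosSemidef → (1 - q').PosSemidef →
        GammaOf q = GammaOf q' →
        ICterm Pout σ q = ICterm Pout σ q')
    ∧ (∀ q : Matrix (Fin K) (Fin K) ℝ, q.PosSemidef → (1 - q).PosSemidef →
        ICterm Pout σ q
          = ICterm Pout σ
              ((GammaOf q / K) •
                (Matrix.of fun _ _ : Fin K => (1 : ℝ)) : Matrix (Fin K) (Fin K) ℝ)) := by
  have hK0 : K ≠ 0 := hK.ne'
  have hbounds (q : Matrix (Fin K) (Fin K) ℝ) (hq : q.PosSemidef) (hq1 : (1 - q).PosSemidef) :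
      0 ≤ GammaOf q ∧ GammaOf q ≤ 1 :=
    ⟨GammaOf_nonneg hq, by linarith [GammaOf_nonneg hq1, GammaOf_one_sub hK0 q]⟩
  have hdepends (q q' : Matrix (Fin K) (Fin K) ℝ) (hq : q.PosSemidef) (hq1 : (1 - q).PosSemidef)
      (hq' : q'.PosSemidef) (hq'1 : (1 - q').PosSemidef) (hΓ : GammaOf q = GammaOf q') :
      ICterm Pout σ q = ICterm Pout σ q' := by
    rw [ICterm_eq_scalarICterm hK0 hPout hσ hq hq1, ICterm_eq_scalarICterm hK0 hPout hσ hq' hq'1,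
      hΓ]
  refine ⟨hbounds, hdepends, fun q hq hq1 => ?_⟩
  obtain ⟨hΓ0, hΓ1⟩ := hbounds q hq hq1
  have hc0 : 0 ≤ GammaOf q / K := by positivity
  have hc1 : GammaOf q / K * Fintype.card (Fin K) ≤ 1 := by
    rwa [Fintype.card_fin, div_mul_cancel₀ _ (Nat.cast_ne_zero.2 hK0)]
  exact hdepends _ _ hq hq1 (posSemidef_smul_allOnes hc0)
    (posSemidef_one_sub_smul_allOnes hc0 hc1) (GammaOf_smul_allOnes hK0 _).symm
end
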